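/- Soundness direction of the modal characterisation: if p and q are stability-respecting branching bisimilar, then p and q satisfy the same modal formulas from the class O_b^s; and if p and q are rooted stability-respecting branching bisimilar, then they satisfy the same formulas from O_rb^s. -/
import Mathlib


variable {P Act : Type*}

/-- ε-reachability: reflexive-transitive closure of τ-transitions. -/
def Eps (Tr : P → Act → P → Prop) (τ : Act) : P → P → Prop :=
  Relation.ReflTransGen (fun a b => Tr a τ b)

/-- B is a branching bisimulation. -/
def IsBranchingBisim (Tr : P → Act → P → Prop) (τ : Act) (B : P → P → Prop) : Prop :=
  Symmetric B ∧ ∀ p q α p', B p q → Tr p α p' →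
    (α = τ ∧ B p' q) ∨ ∃ q' q'', Eps Tr τ q q' ∧ Tr q' α q'' ∧ B p q' ∧ B p' q''

/-- p is stable: no outgoing τ-transition. -/
def Stable (Tr : P → Act → P → Prop) (τ : Act) (p : P) : Prop :=
  ∀ p', ¬ Tr p τ p'

/-- B is stability-respecting. -/
def StabRespecting (Tr : P → Act → P → Prop) (τ : Act) (B : P → P → Prop) : Prop :=
  ∀ p q, B p q → Stable Tr τ p →
    ∃ q', Eps Tr τ q q' ∧ Stable Tr τ q' ∧ B p q'

/-- p is divergent: admits an infinite τ-sequence. -/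
def Divergent (Tr : P → Act → P → Prop) (τ : Act) (p : P) : Prop :=
  ∃ f : ℕ → P, f 0 = p ∧ ∀ k, Tr (f k) τ (f (k + 1))

/-- Condition (D): B is divergence-preserving. -/
def DivPreserving (Tr : P → Act → P → Prop) (τ : Act) (B : P → P → Prop) : Prop :=
  ∀ p q (f : ℕ → P), B p q → f 0 = p → (∀ k, Tr (f k) τ (f (k + 1))) →
    (∀ k, B (f k) q) →
    ∃ g : ℕ → P, g 0 = q ∧ (∀ l, Tr (g l) τ (g (l + 1))) ∧ ∀ k l, B (f k) (g l)

/-- B is weakly divergence-preserving. -/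
def WeakDivPreserving (Tr : P → Act → P → Prop) (τ : Act) (B : P → P → Prop) : Prop :=
  ∀ p q, B p q → Divergent Tr τ p → Divergent Tr τ q

/-- B is a strong bisimulation. -/
def IsStrongBisim (Tr : P → Act → P → Prop) (B : P → P → Prop) : Prop :=
  Symmetric B ∧ ∀ p q α p', B p q → Tr p α p' → ∃ q', Tr q α q' ∧ B p' q'

mutual
/-- The class O_b^s of modal formulas. -/
inductive FB (Act : Type) (τ : Act) : Type 1 where
  | conj : (I : Type) → (I → FB Act τ) → FB Act τ
  | neg : FB Act τ → FB Act τ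
  /-- ⟨ε⟩(φ₁ ∧ ⟨τ̂⟩φ₂) -/
  | epsTau : FB Act τ → FB Act τ → FB Act τ
  /-- ⟨ε⟩(φ₁ ∧ ⟨a⟩φ₂) with a ∈ A, i.e. a ≠ τ -/
  | epsAct : (a : Act) → a ≠ τ → FB Act τ → FB Act τ → FB Act τ
  /-- ⟨ε⟩(¬⟨τ⟩⊤ ∧ φ̄) with φ̄ ∈ O_rb^s -/
  | epsStable : FRB Act τ → FB Act τ

/-- The class O_rb^s of modal formulas. -/
inductive FRB (Act : Type) (τ : Act) : Type 1 where
  | conj : (I : Type) → (I → FRB Act τ) → FRB Act τ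
  | neg : FRB Act τ → FRB Act τ
  /-- ⟨α⟩φ with α ∈ A ∪ {τ} and φ ∈ O_b^s -/
  | diam : Act → FB Act τ → FRB Act τ
  | ofB : FB Act τ → FRB Act τ
end

mutual
/-- Satisfaction of O_b^s formulas. -/
def SatB {P Act : Type} (Tr : P → Act → P → Prop) (τ : Act) :
    P → FB Act τ → Prop
  | p, .conj _ f => ∀ i, SatB Tr τ p (f i)
  | p, .neg φ => ¬ SatB Tr τ p φ
  | p, .epsTau φ₁ φ₂ => ∃ p', Eps Tr τ p p' ∧ SatB Tr τ p' φ₁ ∧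
      (SatB Tr τ p' φ₂ ∨ ∃ p'', Tr p' τ p'' ∧ SatB Tr τ p'' φ₂)
  | p, .epsAct a _ φ₁ φ₂ => ∃ p', Eps Tr τ p p' ∧ SatB Tr τ p' φ₁ ∧
      ∃ p'', Tr p' a p'' ∧ SatB Tr τ p'' φ₂
  | p, .epsStable φ => ∃ p', Eps Tr τ p p' ∧ (∀ p'', ¬ Tr p' τ p'') ∧
      SatRB Tr τ p' φ

/-- Satisfaction of O_rb^s formulas. -/
def SatRB {P Act : Type} (Tr : P → Act → P → Prop) (τ : Act) :
    P → FRB Act τ → Prop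
  | p, .conj _ f => ∀ i, SatRB Tr τ p (f i)
  | p, .neg φ => ¬ SatRB Tr τ p φ
  | p, .diam α φ => ∃ p', Tr p α p' ∧ SatB Tr τ p' φ
  | p, .ofB φ => SatB Tr τ p φ
end

/-- Stability-respecting branching bisimilarity. -/
def SBB {P Act : Type} (Tr : P → Act → P → Prop) (τ : Act) (p q : P) : Prop :=
  ∃ B, IsBranchingBisim Tr τ B ∧ StabRespecting Tr τ B ∧ B p q

/-- Rooted stability-respecting branching bisimilarity. -/
def RootedSBB {P Act : Type} (Tr : P → Act → P → Prop) (τ : Act) (p q : P) : Prop :=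
  (∀ α p', Tr p α p' → ∃ q', Tr q α q' ∧ SBB Tr τ p' q') ∧
  (∀ α q', Tr q α q' → ∃ p', Tr p α p' ∧ SBB Tr τ p' q')

section Aux

variable {P' Act' : Type} (Tr : P' → Act' → P' → Prop) (τ : Act')

lemma sbb_symm {p q : P'} (h : SBB Tr τ p q) : SBB Tr τ q p := by
  obtain ⟨B, hB, hS, hpq⟩ := h
  exact ⟨B, hB, hS, hB.1 hpq⟩

lemma sbb_step {p q : P'} {α : Act'} {p' : P'} (h : SBB Tr τ p q) (ht : Tr p α p') :
    (α = τ ∧ SBB Tr τ p' q) ∨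
    ∃ q' q'', Eps Tr τ q q' ∧ Tr q' α q'' ∧ SBB Tr τ p q' ∧ SBB Tr τ p' q'' := by
  obtain ⟨B, hB, hS, hpq⟩ := h
  rcases hB.2 p q α p' hpq ht with ⟨rfl, h'⟩ | ⟨q', q'', he, ht', h1, h2⟩
  · exact Or.inl ⟨rfl, B, hB, hS, h'⟩
  · exact Or.inr ⟨q', q'', he, ht', ⟨B, hB, hS, h1⟩, ⟨B, hB, hS, h2⟩⟩

lemma sbb_stab {p q : P'} (h : SBB Tr τ p q) (hs : Stable Tr τ p) :
    ∃ q', Eps Tr τ q q' ∧ Stable Tr τ q' ∧ SBB Tr τ p q' := by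
  obtain ⟨B, hB, hS, hpq⟩ := h
  obtain ⟨q', he, hst, h'⟩ := hS p q hpq hs
  exact ⟨q', he, hst, B, hB, hS, h'⟩

lemma sbb_eps {p q p' : P'} (h : SBB Tr τ p q) (he : Eps Tr τ p p') :
    ∃ q', Eps Tr τ q q' ∧ SBB Tr τ p' q' := by
  induction he with
  | refl => exact ⟨q, Relation.ReflTransGen.refl, h⟩
  | tail _ hstep ih =>
    obtain ⟨q', heq, hmq⟩ := ih
    rcases sbb_step Tr τ hmq hstep with ⟨_, h'⟩ | ⟨q₁, q₂, he1, ht1, _, h2⟩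
    · exact ⟨q', heq, h'⟩
    · exact ⟨q₂, (heq.trans he1).tail ht1, h2⟩

lemma rooted_symm {p q : P'} (h : RootedSBB Tr τ p q) : RootedSBB Tr τ q p := by
  refine ⟨fun α q' ht => ?_, fun α p' ht => ?_⟩
  · obtain ⟨p', ht', hs⟩ := h.2 α q' ht
    exact ⟨p', ht', sbb_symm Tr τ hs⟩
  · obtain ⟨q', ht', hs⟩ := h.1 α p' ht
    exact ⟨q', ht', sbb_symm Tr τ hs⟩

lemma rooted_to_sbb {p q : P'} (h : RootedSBB Tr τ p q) : SBB Tr τ p q := by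
  set B : P' → P' → Prop := fun x y => SBB Tr τ x y ∨ (x = p ∧ y = q) ∨ (x = q ∧ y = p)
    with hBdef
  have hBsymm : Symmetric B := by
    intro x y hxy
    rcases hxy with hs | ⟨rfl, rfl⟩ | ⟨rfl, rfl⟩
    · exact Or.inl (sbb_symm Tr τ hs)
    · exact Or.inr (Or.inr ⟨rfl, rfl⟩)
    · exact Or.inr (Or.inl ⟨rfl, rfl⟩)
  refine ⟨B, ⟨hBsymm, ?_⟩, ?_, Or.inr (Or.inl ⟨rfl, rfl⟩)⟩
  · intro x y α x' hxy ht
    rcases hxy with hs | ⟨rfl, rfl⟩ | ⟨rfl, rfl⟩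
    · rcases sbb_step Tr τ hs ht with ⟨rfl, h'⟩ | ⟨y', y'', he, ht', h1, h2⟩
      · exact Or.inl ⟨rfl, Or.inl h'⟩
      · exact Or.inr ⟨y', y'', he, ht', Or.inl h1, Or.inl h2⟩
    · obtain ⟨y', ht', hs'⟩ := h.1 α x' ht
      exact Or.inr ⟨y, y', Relation.ReflTransGen.refl, ht',
        Or.inr (Or.inl ⟨rfl, rfl⟩), Or.inl hs'⟩
    · obtain ⟨y', ht', hs'⟩ := h.2 α x' ht
      exact Or.inr ⟨y, y', Relation.ReflTransGen.refl, ht',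
        Or.inr (Or.inr ⟨rfl, rfl⟩), Or.inl (sbb_symm Tr τ hs')⟩
  · intro x y hxy hsx
    rcases hxy with hs | ⟨rfl, rfl⟩ | ⟨rfl, rfl⟩
    · obtain ⟨y', he, hst, h'⟩ := sbb_stab Tr τ hs hsx
      exact ⟨y', he, hst, Or.inl h'⟩
    · refine ⟨y, Relation.ReflTransGen.refl, ?_, Or.inr (Or.inl ⟨rfl, rfl⟩)⟩
      intro y' ht
      obtain ⟨x', htx, _⟩ := h.2 τ y' ht
      exact hsx x' htx
    · refine ⟨y, Relation.ReflTransGen.refl, ?_, Or.inr (Or.inr ⟨rfl, rfl⟩)⟩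
      intro y' ht
      obtain ⟨x', htx, _⟩ := h.1 τ y' ht
      exact hsx x' htx

lemma stable_rooted {p q : P'} (h : SBB Tr τ p q)
    (hsp : Stable Tr τ p) (hsq : Stable Tr τ q) : RootedSBB Tr τ p q := by
  have half : ∀ (p q : P'), SBB Tr τ p q → Stable Tr τ p → Stable Tr τ q →
      ∀ α p', Tr p α p' → ∃ q', Tr q α q' ∧ SBB Tr τ p' q' := by
    intro p q h hsp hsq α p' ht
    rcases sbb_step Tr τ h ht with ⟨rfl, h'⟩ | ⟨q', q'', he, ht', _, h2⟩
    · exact absurd ht (hsp p')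
    · rcases Relation.ReflTransGen.cases_head he with rfl | ⟨c, hc, _⟩
      · exact ⟨q'', ht', h2⟩
      · exact absurd hc (hsq c)
  exact ⟨half p q h hsp hsq, fun α q' ht => by
    obtain ⟨p', htp, hs⟩ := half q p (sbb_symm Tr τ h) hsq hsp α q' ht
    exact ⟨p', htp, sbb_symm Tr τ hs⟩⟩

end Aux

mutual
theorem fbMono {P' Act' : Type} (Tr : P' → Act' → P' → Prop) (τ : Act') :
    ∀ (φ : FB Act' τ) (p q : P'), SBB Tr τ p q → SatB Tr τ p φ → SatB Tr τ q φ
  | .conj I f, p, q, h, hs => fun i => fbMono Tr τ (f i) p q h (hs i)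
  | .neg φ, p, q, h, hs => fun hq => hs (fbMono Tr τ φ q p (sbb_symm Tr τ h) hq)
  | .epsTau φ₁ φ₂, p, q, h, hs => by
    obtain ⟨p', he, h1, h2⟩ := hs
    obtain ⟨q', heq, hrel⟩ := sbb_eps Tr τ h he
    rcases h2 with h2 | ⟨p'', ht, h2⟩
    · exact ⟨q', heq, fbMono Tr τ φ₁ p' q' hrel h1,
        Or.inl (fbMono Tr τ φ₂ p' q' hrel h2)⟩
    · rcases sbb_step Tr τ hrel ht with ⟨_, h'⟩ | ⟨q₁, q₂, he1, ht1, h1', h2'⟩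
      · exact ⟨q', heq, fbMono Tr τ φ₁ p' q' hrel h1,
          Or.inl (fbMono Tr τ φ₂ p'' q' h' h2)⟩
      · exact ⟨q₁, heq.trans he1, fbMono Tr τ φ₁ p' q₁ h1' h1,
          Or.inr ⟨q₂, ht1, fbMono Tr τ φ₂ p'' q₂ h2' h2⟩⟩
  | .epsAct a ha φ₁ φ₂, p, q, h, hs => by
    obtain ⟨p', he, h1, p'', ht, h2⟩ := hs
    obtain ⟨q', heq, hrel⟩ := sbb_eps Tr τ h he
    rcases sbb_step Tr τ hrel ht with ⟨rfl, _⟩ | ⟨q₁, q₂, he1, ht1, h1', h2'⟩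
    · exact absurd rfl ha
    · exact ⟨q₁, heq.trans he1, fbMono Tr τ φ₁ p' q₁ h1' h1,
        q₂, ht1, fbMono Tr τ φ₂ p'' q₂ h2' h2⟩
  | .epsStable φ, p, q, h, hs => by
    obtain ⟨p', he, hst, hsat⟩ := hs
    obtain ⟨q', heq, hrel⟩ := sbb_eps Tr τ h he
    obtain ⟨q'', he2, hst2, hrel2⟩ := sbb_stab Tr τ hrel hst
    exact ⟨q'', heq.trans he2, hst2,
      frbMono Tr τ φ p' q'' (stable_rooted Tr τ hrel2 hst hst2) hsat⟩

theorem frbMono {P' Act' : Type} (Tr : P' → Act' → P' → Prop) (τ : Act') :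
    ∀ (φ : FRB Act' τ) (p q : P'), RootedSBB Tr τ p q → SatRB Tr τ p φ → SatRB Tr τ q φ
  | .conj I f, p, q, h, hs => fun i => frbMono Tr τ (f i) p q h (hs i)
  | .neg φ, p, q, h, hs => fun hq => hs (frbMono Tr τ φ q p (rooted_symm Tr τ h) hq)
  | .diam α φ, p, q, h, hs => by
    obtain ⟨p', ht, hsat⟩ := hs
    obtain ⟨q', ht', hrel⟩ := h.1 α p' ht
    exact ⟨q', ht', fbMono Tr τ φ p' q' hrel hsat⟩
  | .ofB φ, p, q, h, hs => fbMono Tr τ φ p q (rooted_to_sbb Tr τ h) hs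
end

/-- soundness of the modal characterisations: stability-respecting
branching bisimilar processes satisfy the same O_b^s formulas, and rooted
stability-respecting branching bisimilar processes satisfy the same O_rb^s
formulas. -/
theorem stmt8 {P Act : Type} (Tr : P → Act → P → Prop) (τ : Act) (p q : P) :
    (SBB Tr τ p q → ∀ φ : FB Act τ, SatB Tr τ p φ ↔ SatB Tr τ q φ) ∧
    (RootedSBB Tr τ p q → ∀ φ : FRB Act τ, SatRB Tr τ p φ ↔ SatRB Tr τ q φ) := by
  refine ⟨fun h φ => ⟨fbMono Tr τ φ p q h, fbMono Tr τ φ q p (sbb_symm Tr τ h)⟩,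
    fun h φ => ⟨frbMono Tr τ φ p q h, frbMono Tr τ φ q p (rooted_symm Tr τ h)⟩⟩
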